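/- arXiv:1004.3006 — 4 statements merged into one kernel-verified Lean document; each statement's English description precedes it below -/
import Mathlib

section
/- Let H be a separable Hilbert space, let Φ₁ = (φ_{1,i})_{i∈I₁} and Φ₂ = (φ_{2,i})_{i∈I₂} be Parseval frames in H, let S₁ ⊆ I₁, S₂ ⊆ I₂, δ ≥ 0, and suppose κ := κ(S₁,S₂) < 1/2. Suppose S ∈ H decomposes as S = S₁⁰ + S₂⁰ where ‖Φ₁ᵀS₁⁰‖₁ + ‖Φ₂ᵀS₂⁰‖₁ < ∞ and ‖1_{S₁ᶜ}Φ₁ᵀS₁⁰‖₁ + ‖1_{S₂ᶜ}Φ₂ᵀS₂⁰‖₁ ≤ δ. Let (S₁⋆, S₂⋆) be a minimizer of ‖Φ₁ᵀT₁‖₁ + ‖Φ₂ᵀT₂‖₁ (values in [0,∞]) over all pairs (T₁,T₂) ∈ H × H with T₁ + T₂ = S. Then ‖S₁⋆ − S₁⁰‖ + ‖S₂⋆ − S₂⁰‖ ≤ 2δ/(1 − 2κ). -/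
open scoped ENNReal NNReal

noncomputable section

variable {H : Type*} [NormedAddCommGroup H] [InnerProductSpace ℂ H]

/-- A countable family is a Parseval frame if it satisfies the Parseval identity. -/
def IsParsevalFrame {I : Type*} (Φ : I → H) : Prop :=
  ∀ f : H, ∑' i, ‖(inner ℂ (Φ i) f : ℂ)‖ ^ 2 = ‖f‖ ^ 2

/-- `ℓ¹` norm (in `[0,∞]`) of the analysis coefficients of `f` in the frame `Φ`. -/
def analysisL1 {I : Type*} (Φ : I → H) (f : H) : ℝ≥0∞ :=
  ∑' i, (‖(inner ℂ (Φ i) f : ℂ)‖₊ : ℝ≥0∞)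

/-- `ℓ¹` norm of the analysis coefficients restricted to the index set `S`. -/
def analysisL1On {I : Type*} (Φ : I → H) (S : Set I) (f : H) : ℝ≥0∞ :=
  ∑' i : S, (‖(inner ℂ (Φ (i : I)) f : ℂ)‖₊ : ℝ≥0∞)

/-- The joint concentration `κ(S₁, S₂)` of two frames on index sets `S₁`, `S₂`. -/
def jointConcentration {I₁ I₂ : Type*} (Φ₁ : I₁ → H) (Φ₂ : I₂ → H)
    (S₁ : Set I₁) (S₂ : Set I₂) : ℝ≥0∞ :=
  ⨆ f : {f : H // 0 < analysisL1 Φ₁ f + analysisL1 Φ₂ f ∧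
      analysisL1 Φ₁ f + analysisL1 Φ₂ f < ⊤},
    (analysisL1On Φ₁ S₁ (f : H) + analysisL1On Φ₂ S₂ (f : H)) /
      (analysisL1 Φ₁ (f : H) + analysisL1 Φ₂ (f : H))

/-! Let `W = S₁⋆ - S₁⁰`, so that `S₂⋆ - S₂⁰ = -W`. Since `(S₁⋆, S₂⋆)` costs no more than
`(S₁⁰, S₂⁰)`, the triangle inequality gives a cone condition: the `ℓ¹` mass of the coefficients
of `W` off `(S₁, S₂)` exceeds their mass on `(S₁, S₂)` by at most `2δ`. The joint concentration
bounds the mass on `(S₁, S₂)` by `κ T`, where `T` is the total mass, hence `T ≤ 2κT + 2δ`.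
Finally a Parseval frame gives `‖f‖ = ‖Φᵀf‖₂ ≤ ‖Φᵀf‖₁`, so `‖W‖ + ‖-W‖ ≤ T`. -/

lemma ENNReal.tsum_sq_le_sq_tsum {ι : Type*} (c : ι → ℝ≥0∞) :
    ∑' i, c i ^ 2 ≤ (∑' i, c i) ^ 2 := by
  rw [sq, ← ENNReal.tsum_mul_right]
  exact ENNReal.tsum_le_tsum fun i => by rw [sq]; gcongr; exact ENNReal.le_tsum i

lemma ENNReal.toReal_le_div_of_le_mul_add {t c d : ℝ≥0∞} (ht : t ≠ ⊤) (hc : c < 1)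
    (hd : d ≠ ⊤) (h : t ≤ c * t + d) : t.toReal ≤ d.toReal / (1 - c.toReal) := by
  have hc' : c.toReal < 1 := ENNReal.toReal_lt_of_lt_ofReal (by simpa using hc)
  have hreal : t.toReal ≤ c.toReal * t.toReal + d.toReal := by
    simpa [ENNReal.toReal_add, ENNReal.mul_ne_top hc.ne_top ht, hd] using
      ENNReal.toReal_mono (by finiteness) h
  rw [le_div_iff₀ (by linarith)]
  linarith

section Frames

variable {I : Type*} (Φ : I → H)

lemma analysisL1_neg (f : H) : analysisL1 Φ (-f) = analysisL1 Φ f := by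
  simp [analysisL1, inner_neg_right]

lemma analysisL1On_neg (S : Set I) (f : H) : analysisL1On Φ S (-f) = analysisL1On Φ S f := by
  simp [analysisL1On, inner_neg_right]

lemma analysisL1On_add_analysisL1On_compl (S : Set I) (f : H) :
    analysisL1On Φ S f + analysisL1On Φ Sᶜ f = analysisL1 Φ f :=
  ENNReal.summable.tsum_add_tsum_compl (f := fun i => (‖(inner ℂ (Φ i) f : ℂ)‖₊ : ℝ≥0∞))
    ENNReal.summable

lemma analysisL1On_le_analysisL1 (S : Set I) (f : H) : analysisL1On Φ S f ≤ analysisL1 Φ f :=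
  le_self_add.trans_eq (analysisL1On_add_analysisL1On_compl Φ S f)

lemma analysisL1_sub_le (f g : H) :
    analysisL1 Φ (f - g) ≤ analysisL1 Φ f + analysisL1 Φ g := by
  rw [analysisL1, analysisL1, analysisL1, ← ENNReal.tsum_add]
  refine ENNReal.tsum_le_tsum fun i => ?_
  rw [← ENNReal.coe_add, ENNReal.coe_le_coe, inner_sub_right]
  exact nnnorm_sub_le _ _

lemma analysisL1On_sub_le (S : Set I) (f g : H) :
    analysisL1On Φ S (f - g) ≤ analysisL1On Φ S f + analysisL1On Φ S g := by
  rw [analysisL1On, analysisL1On, analysisL1On, ← ENNReal.tsum_add]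
  refine ENNReal.tsum_le_tsum fun i => ?_
  rw [← ENNReal.coe_add, ENNReal.coe_le_coe, inner_sub_right]
  exact nnnorm_sub_le _ _

lemma analysisL1On_add_analysisL1On_compl_sub_le (S : Set I) (x y : H) :
    analysisL1On Φ S y + analysisL1On Φ Sᶜ (x - y) ≤
      analysisL1 Φ x + analysisL1On Φ S (x - y) + analysisL1On Φ Sᶜ y := by
  have hS : analysisL1On Φ S y ≤ analysisL1On Φ S x + analysisL1On Φ S (x - y) := by
    simpa using analysisL1On_sub_le Φ S x (x - y)
  calc analysisL1On Φ S y + analysisL1On Φ Sᶜ (x - y)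
      ≤ (analysisL1On Φ S x + analysisL1On Φ S (x - y)) +
          (analysisL1On Φ Sᶜ x + analysisL1On Φ Sᶜ y) :=
        add_le_add hS (analysisL1On_sub_le Φ Sᶜ x y)
    _ = analysisL1 Φ x + analysisL1On Φ S (x - y) + analysisL1On Φ Sᶜ y := by
        rw [← analysisL1On_add_analysisL1On_compl Φ S x]; ring

lemma IsParsevalFrame.enorm_le_analysisL1 {Φ : I → H} (hΦ : IsParsevalFrame Φ) (f : H) :
    ‖f‖ₑ ≤ analysisL1 Φ f := by
  have hparseval : ‖f‖ₑ ^ 2 ≤ ∑' i, (‖(inner ℂ (Φ i) f : ℂ)‖₊ : ℝ≥0∞) ^ 2 := by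
    rw [← ofReal_norm, ← ENNReal.ofReal_pow (norm_nonneg _), ← hΦ f]
    by_cases hs : Summable fun i => ‖(inner ℂ (Φ i) f : ℂ)‖ ^ 2
    · simp [ENNReal.ofReal_tsum_of_nonneg (fun _ => by positivity) hs, ENNReal.ofReal_pow,
        enorm_eq_nnnorm]
    · simp [tsum_eq_zero_of_not_summable hs]
  exact (ENNReal.pow_le_pow_left_iff two_ne_zero).1
    (hparseval.trans (ENNReal.tsum_sq_le_sq_tsum _))

end Frames

section Pairs

variable {I₁ I₂ : Type*} (Φ₁ : I₁ → H) (Φ₂ : I₂ → H) (S₁ : Set I₁) (S₂ : Set I₂)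

lemma analysisL1On_add_le_jointConcentration_mul (f : H)
    (hf : analysisL1 Φ₁ f + analysisL1 Φ₂ f ≠ ⊤) :
    analysisL1On Φ₁ S₁ f + analysisL1On Φ₂ S₂ f ≤
      jointConcentration Φ₁ Φ₂ S₁ S₂ * (analysisL1 Φ₁ f + analysisL1 Φ₂ f) := by
  by_cases h0 : analysisL1 Φ₁ f + analysisL1 Φ₂ f = 0
  · have hle := add_le_add (analysisL1On_le_analysisL1 Φ₁ S₁ f)
      (analysisL1On_le_analysisL1 Φ₂ S₂ f)
    rw [h0] at hle ⊢
    exact hle.trans zero_le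
  · rw [← ENNReal.div_le_iff_le_mul (Or.inl h0) (Or.inl hf)]
    exact le_iSup_of_le (⟨f, pos_iff_ne_zero.2 h0, hf.lt_top⟩ : {f : H // _}) le_rfl

/-- The cone condition satisfied by the error of a decomposition that is no more costly. -/
lemma analysisL1On_compl_sub_le_of_analysisL1_le (x₁ x₂ y₁ y₂ : H)
    (hy : analysisL1On Φ₁ S₁ y₁ + analysisL1On Φ₂ S₂ y₂ ≠ ⊤)
    (hxy : analysisL1 Φ₁ x₁ + analysisL1 Φ₂ x₂ ≤ analysisL1 Φ₁ y₁ + analysisL1 Φ₂ y₂) :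
    analysisL1On Φ₁ S₁ᶜ (x₁ - y₁) + analysisL1On Φ₂ S₂ᶜ (x₂ - y₂) ≤
      analysisL1On Φ₁ S₁ (x₁ - y₁) + analysisL1On Φ₂ S₂ (x₂ - y₂) +
        2 * (analysisL1On Φ₁ S₁ᶜ y₁ + analysisL1On Φ₂ S₂ᶜ y₂) := by
  refine (ENNReal.add_le_add_iff_left hy).1 ?_
  calc analysisL1On Φ₁ S₁ y₁ + analysisL1On Φ₂ S₂ y₂ +
        (analysisL1On Φ₁ S₁ᶜ (x₁ - y₁) + analysisL1On Φ₂ S₂ᶜ (x₂ - y₂))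
      ≤ (analysisL1 Φ₁ x₁ + analysisL1On Φ₁ S₁ (x₁ - y₁) + analysisL1On Φ₁ S₁ᶜ y₁) +
          (analysisL1 Φ₂ x₂ + analysisL1On Φ₂ S₂ (x₂ - y₂) + analysisL1On Φ₂ S₂ᶜ y₂) := by
        rw [add_add_add_comm]
        exact add_le_add (analysisL1On_add_analysisL1On_compl_sub_le Φ₁ S₁ x₁ y₁)
          (analysisL1On_add_analysisL1On_compl_sub_le Φ₂ S₂ x₂ y₂)
    _ ≤ (analysisL1 Φ₁ y₁ + analysisL1 Φ₂ y₂) +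
          (analysisL1On Φ₁ S₁ (x₁ - y₁) + analysisL1On Φ₂ S₂ (x₂ - y₂)) +
          (analysisL1On Φ₁ S₁ᶜ y₁ + analysisL1On Φ₂ S₂ᶜ y₂) := by
        rw [add_add_add_comm, add_add_add_comm (analysisL1 Φ₁ x₁)]
        gcongr
    _ = _ := by
        rw [← analysisL1On_add_analysisL1On_compl Φ₁ S₁ y₁,
          ← analysisL1On_add_analysisL1On_compl Φ₂ S₂ y₂]
        ring

end Pairs

theorem separation_l1_minimization_general
    {I₁ I₂ : Type*}
    (Φ₁ : I₁ → H) (Φ₂ : I₂ → H)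
    (hΦ₁ : IsParsevalFrame Φ₁) (hΦ₂ : IsParsevalFrame Φ₂)
    (S₁ : Set I₁) (S₂ : Set I₂) (δ : ℝ) (hδ : 0 ≤ δ)
    (hκ : jointConcentration Φ₁ Φ₂ S₁ S₂ < 1 / 2)
    (S S₁0 S₂0 : H) (hS : S = S₁0 + S₂0)
    (hfin : analysisL1 Φ₁ S₁0 + analysisL1 Φ₂ S₂0 < ⊤)
    (hsparse : analysisL1On Φ₁ S₁ᶜ S₁0 + analysisL1On Φ₂ S₂ᶜ S₂0 ≤ ENNReal.ofReal δ)
    (S₁s S₂s : H) (hsum : S₁s + S₂s = S)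
    (hmin : ∀ T₁ T₂ : H, T₁ + T₂ = S →
      analysisL1 Φ₁ S₁s + analysisL1 Φ₂ S₂s ≤ analysisL1 Φ₁ T₁ + analysisL1 Φ₂ T₂) :
    ‖S₁s - S₁0‖ + ‖S₂s - S₂0‖ ≤
      2 * δ / (1 - 2 * (jointConcentration Φ₁ Φ₂ S₁ S₂).toReal) := by
  set κ := jointConcentration Φ₁ Φ₂ S₁ S₂
  set W := S₁s - S₁0
  have hW₂ : S₂s - S₂0 = -W := by
    rw [neg_sub, sub_eq_sub_iff_add_eq_add, add_comm, hsum, hS]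
  have hmin₀ := hmin S₁0 S₂0 hS.symm
  set T := analysisL1 Φ₁ W + analysisL1 Φ₂ W
  have hT : T ≠ ⊤ := by
    have := add_le_add (analysisL1_sub_le Φ₁ S₁s S₁0) (analysisL1_sub_le Φ₂ S₂s S₂0)
    rw [hW₂, analysisL1_neg, add_add_add_comm] at this
    exact (this.trans_lt (ENNReal.add_lt_top.2 ⟨hmin₀.trans_lt hfin, hfin⟩)).ne
  have hcone := analysisL1On_compl_sub_le_of_analysisL1_le Φ₁ Φ₂ S₁ S₂ S₁s S₂s S₁0 S₂0
    (ne_top_of_le_ne_top hfin.ne (add_le_add (analysisL1On_le_analysisL1 Φ₁ S₁ S₁0)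
      (analysisL1On_le_analysisL1 Φ₂ S₂ S₂0))) hmin₀
  rw [hW₂, analysisL1On_neg, analysisL1On_neg] at hcone
  have hconc := analysisL1On_add_le_jointConcentration_mul Φ₁ Φ₂ S₁ S₂ W hT
  have hTle : T ≤ 2 * κ * T + 2 * ENNReal.ofReal δ := by
    calc T = (analysisL1On Φ₁ S₁ W + analysisL1On Φ₂ S₂ W) +
          (analysisL1On Φ₁ S₁ᶜ W + analysisL1On Φ₂ S₂ᶜ W) := by
          rw [add_add_add_comm, analysisL1On_add_analysisL1On_compl,
            analysisL1On_add_analysisL1On_compl]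
      _ ≤ (analysisL1On Φ₁ S₁ W + analysisL1On Φ₂ S₂ W) +
          (analysisL1On Φ₁ S₁ W + analysisL1On Φ₂ S₂ W + 2 * ENNReal.ofReal δ) := by
          grw [hcone, hsparse]
      _ ≤ κ * T + (κ * T + 2 * ENNReal.ofReal δ) := by grw [hconc]
      _ = 2 * κ * T + 2 * ENNReal.ofReal δ := by ring
  have hnorm : ‖W‖ₑ + ‖W‖ₑ ≤ T := add_le_add (hΦ₁.enorm_le_analysisL1 W) (hΦ₂.enorm_le_analysisL1 W)
  rw [hW₂, norm_neg]
  calc ‖W‖ + ‖W‖ = (‖W‖ₑ + ‖W‖ₑ).toReal := by simp [ENNReal.toReal_add]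
    _ ≤ T.toReal := ENNReal.toReal_mono hT hnorm
    _ ≤ (2 * ENNReal.ofReal δ).toReal / (1 - (2 * κ).toReal) :=
        ENNReal.toReal_le_div_of_le_mul_add hT (ENNReal.mul_lt_of_lt_div' hκ) (by finiteness) hTle
    _ = 2 * δ / (1 - 2 * κ.toReal) := by simp [ENNReal.toReal_mul, hδ]

/-- Proposition 2.2: stability of `ℓ₁`-minimization based component separation. -/
theorem separation_l1_minimization
    [CompleteSpace H] [SecondCountableTopology H]
    {I₁ I₂ : Type*} [Countable I₁] [Countable I₂]
    (Φ₁ : I₁ → H) (Φ₂ : I₂ → H)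
    (hΦ₁ : IsParsevalFrame Φ₁) (hΦ₂ : IsParsevalFrame Φ₂)
    (S₁ : Set I₁) (S₂ : Set I₂) (δ : ℝ) (hδ : 0 ≤ δ)
    (hκ : jointConcentration Φ₁ Φ₂ S₁ S₂ < 1 / 2)
    (S S₁0 S₂0 : H) (hS : S = S₁0 + S₂0)
    (hfin : analysisL1 Φ₁ S₁0 + analysisL1 Φ₂ S₂0 < ⊤)
    (hsparse : analysisL1On Φ₁ S₁ᶜ S₁0 + analysisL1On Φ₂ S₂ᶜ S₂0 ≤ ENNReal.ofReal δ)
    (S₁s S₂s : H) (hsum : S₁s + S₂s = S)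
    (hmin : ∀ T₁ T₂ : H, T₁ + T₂ = S →
      analysisL1 Φ₁ S₁s + analysisL1 Φ₂ S₂s ≤ analysisL1 Φ₁ T₁ + analysisL1 Φ₂ T₂) :
    ‖S₁s - S₁0‖ + ‖S₂s - S₂0‖ ≤
      2 * δ / (1 - 2 * (jointConcentration Φ₁ Φ₂ S₁ S₂).toReal) :=
  separation_l1_minimization_general Φ₁ Φ₂ hΦ₁ hΦ₂ S₁ S₂ δ hδ hκ S S₁0 S₂0 hS hfin hsparse S₁s S₂s
    hsum hmin
end
end

section
/- Let H be a separable Hilbert space, let Φ₁ = (φ_{1,i})_{i∈I₁} and Φ₂ = (φ_{2,i})_{i∈I₂} be Parseval frames in H, and let S₁ ⊆ I₁ and S₂ ⊆ I₂. Then the joint concentration satisfies κ(S₁,S₂) ≤ max{ μ_c(S₁, Φ₁; Φ₂), μ_c(S₂, Φ₂; Φ₁) }. -/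
open scoped ENNReal NNReal

noncomputable section

variable {H : Type*} [NormedAddCommGroup H] [InnerProductSpace ℂ H]

/-- Cluster coherence `μ_c(S, Φ; Ψ)` of the frame `Φ` with respect to `Ψ` on `S`. -/
def clusterCoherence {I J : Type*} (Φ : I → H) (Ψ : J → H) (S : Set I) : ℝ≥0∞ :=
  ⨆ j : J, ∑' i : S, (‖(inner ℂ (Φ (i : I)) (Ψ j) : ℂ)‖₊ : ℝ≥0∞)

/-!
The analysis operator of a Parseval frame `Ψ` is an isometry into `ℓ²`, so it preserves inner
products: `⟪g, f⟫ = ∑ⱼ conj ⟪ψⱼ, g⟫ ⟪ψⱼ, f⟫`. Hence `|⟪φᵢ, f⟫| ≤ ∑ⱼ |⟪φᵢ, ψⱼ⟫| |⟪ψⱼ, f⟫|`, and summing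
over `i ∈ S` and exchanging the sums gives `‖1_S Φᵀf‖₁ ≤ μ_c(S, Φ; Ψ) ‖Ψᵀf‖₁`. Adding this bound
for `(Φ₁, Φ₂, S₁)` and `(Φ₂, Φ₁, S₂)` bounds the numerator of `κ` by the larger coherence times the
denominator.
-/

namespace IsParsevalFrame

variable {I : Type*} {Φ : I → H}

lemma summable_sq_norm_inner (hΦ : IsParsevalFrame Φ) (f : H) :
    Summable fun i => ‖(inner ℂ (Φ i) f : ℂ)‖ ^ 2 := by
  -- `IsParsevalFrame` does not assert summability, but a divergent `tsum` is `0`, forcing `f = 0`.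
  by_contra hs
  have hf : f = 0 := by
    have h := hΦ f
    rw [tsum_eq_zero_of_not_summable hs] at h
    exact norm_eq_zero.mp (pow_eq_zero_iff two_ne_zero |>.mp h.symm)
  subst hf
  simp at hs

def analysis (hΦ : IsParsevalFrame Φ) : H →ₗᵢ[ℂ] lp (fun _ : I => ℂ) 2 where
  toFun f := ⟨fun i => inner ℂ (Φ i) f, memℓp_gen (by simpa using hΦ.summable_sq_norm_inner f)⟩
  map_add' f g := by ext i; exact inner_add_right _ _ _
  map_smul' c f := by ext i; exact inner_smul_right _ _ _
  norm_map' f := by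
    rw [← sq_eq_sq₀ (norm_nonneg _) (norm_nonneg _), ← hΦ f]
    exact_mod_cast lp.norm_rpow_eq_tsum (p := 2) (by norm_num) _

lemma inner_eq_tsum (hΦ : IsParsevalFrame Φ) (g f : H) :
    inner ℂ g f = ∑' i, (starRingEnd ℂ) (inner ℂ (Φ i) g) * inner ℂ (Φ i) f := by
  rw [← hΦ.analysis.inner_map_map g f, lp.inner_eq_tsum]
  exact tsum_congr fun i => by rw [RCLike.inner_apply, mul_comm]; rfl

lemma enorm_inner_le_tsum (hΦ : IsParsevalFrame Φ) (g f : H) :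
    (‖(inner ℂ g f : ℂ)‖₊ : ℝ≥0∞) ≤
      ∑' i, (‖(inner ℂ g (Φ i) : ℂ)‖₊ : ℝ≥0∞) * ‖(inner ℂ (Φ i) f : ℂ)‖₊ := by
  rw [hΦ.inner_eq_tsum g f]
  refine (enorm_tsum_le_tsum_enorm (ε := ℂ)).trans_eq (tsum_congr fun i => ?_)
  rw [inner_conj_symm]
  exact enorm_mul _ _

end IsParsevalFrame

lemma analysisL1On_le_clusterCoherence_mul {I J : Type*} (Φ : I → H) {Ψ : J → H}
    (hΨ : IsParsevalFrame Ψ) (S : Set I) (f : H) :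
    analysisL1On Φ S f ≤ clusterCoherence Φ Ψ S * analysisL1 Ψ f := by
  calc analysisL1On Φ S f
      ≤ ∑' i : S, ∑' j, (‖(inner ℂ (Φ i) (Ψ j) : ℂ)‖₊ : ℝ≥0∞) * ‖(inner ℂ (Ψ j) f : ℂ)‖₊ :=
        ENNReal.tsum_le_tsum fun i => hΨ.enorm_inner_le_tsum (Φ i) f
    _ = ∑' j, (∑' i : S, (‖(inner ℂ (Φ i) (Ψ j) : ℂ)‖₊ : ℝ≥0∞)) * ‖(inner ℂ (Ψ j) f : ℂ)‖₊ := by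
        rw [ENNReal.tsum_comm]
        simp only [ENNReal.tsum_mul_right]
    _ ≤ ∑' j, clusterCoherence Φ Ψ S * ‖(inner ℂ (Ψ j) f : ℂ)‖₊ :=
        ENNReal.tsum_le_tsum fun j => mul_le_mul_left
          (le_iSup (fun j => ∑' i : S, (‖(inner ℂ (Φ i) (Ψ j) : ℂ)‖₊ : ℝ≥0∞)) j) _
    _ = clusterCoherence Φ Ψ S * analysisL1 Ψ f := ENNReal.tsum_mul_left

theorem jointConcentration_le_max_clusterCoherence_general
    {I₁ I₂ : Type*}
    (Φ₁ : I₁ → H) (Φ₂ : I₂ → H)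
    (hΦ₁ : IsParsevalFrame Φ₁) (hΦ₂ : IsParsevalFrame Φ₂)
    (S₁ : Set I₁) (S₂ : Set I₂) :
    jointConcentration Φ₁ Φ₂ S₁ S₂ ≤
      max (clusterCoherence Φ₁ Φ₂ S₁) (clusterCoherence Φ₂ Φ₁ S₂) := by
  set M := max (clusterCoherence Φ₁ Φ₂ S₁) (clusterCoherence Φ₂ Φ₁ S₂)
  refine iSup_le fun f => ENNReal.div_le_of_le_mul' ?_
  calc analysisL1On Φ₁ S₁ f + analysisL1On Φ₂ S₂ f
      ≤ M * analysisL1 Φ₂ f + M * analysisL1 Φ₁ f := by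
        gcongr
        · exact (analysisL1On_le_clusterCoherence_mul Φ₁ hΦ₂ S₁ f).trans
            (mul_le_mul_left (le_max_left _ _) _)
        · exact (analysisL1On_le_clusterCoherence_mul Φ₂ hΦ₁ S₂ f).trans
            (mul_le_mul_left (le_max_right _ _) _)
    _ = (analysisL1 Φ₁ f + analysisL1 Φ₂ f) * M := by ring

/-- Lemma 2.3: the joint concentration is bounded by the maximum of the two cluster
coherences. -/
theorem jointConcentration_le_max_clusterCoherence
    [CompleteSpace H] [SecondCountableTopology H]
    {I₁ I₂ : Type*} [Countable I₁] [Countable I₂]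
    (Φ₁ : I₁ → H) (Φ₂ : I₂ → H)
    (hΦ₁ : IsParsevalFrame Φ₁) (hΦ₂ : IsParsevalFrame Φ₂)
    (S₁ : Set I₁) (S₂ : Set I₂) :
    jointConcentration Φ₁ Φ₂ S₁ S₂ ≤
      max (clusterCoherence Φ₁ Φ₂ S₁) (clusterCoherence Φ₂ Φ₁ S₂) :=
  jointConcentration_le_max_clusterCoherence_general Φ₁ Φ₂ hΦ₁ hΦ₂ S₁ S₂
end
end

section
/- For every real N > 2, every x₀ ∈ ℝ, and every y₀ ≥ 0, the ray integral R_N(x₀,y₀) = ∫_{y₀}^{∞} ⟨|(x₀,t)|⟩^{−N} dt satisfies R_N(x₀,y₀) ≤ π · ⟨|x₀|⟩^{−1} · ⟨|(x₀,y₀)|⟩^{2−N}. -/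
open MeasureTheory
open scoped Real

noncomputable section

/-- The analyst's bracket `⟨t⟩ = (1 + t²)^{1/2}`. -/
def jap (t : ℝ) : ℝ := Real.sqrt (1 + t ^ 2)

/-- `⟨|(x,y)|⟩ = (1 + x² + y²)^{1/2}`. -/
def japNorm2 (x y : ℝ) : ℝ := Real.sqrt (1 + x ^ 2 + y ^ 2)

/-- The ray integral `R_N(x₀, y₀) = ∫_{y₀}^∞ ⟨|(x₀,t)|⟩^{-N} dt`. -/
def rayIntegral (N : ℝ) (x₀ y₀ : ℝ) : ℝ :=
  ∫ t in Set.Ici y₀, japNorm2 x₀ t ^ (-N)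

/-! For `t ≥ y₀ ≥ 0` and `N ≥ 2`, splitting `⟨(x₀,t)⟩^{-N} = ⟨(x₀,t)⟩^{2-N} · ⟨(x₀,t)⟩^{-2}` and
bounding the first factor by its value at `t = y₀` leaves `∫_ℝ (⟨x₀⟩² + t²)⁻¹ dt = π / ⟨x₀⟩`. -/

lemma inv_sq_add_sq_eq {a : ℝ} (ha : a ≠ 0) (t : ℝ) :
    (a ^ 2 + t ^ 2)⁻¹ = (a ^ 2)⁻¹ * (1 + (t / a) ^ 2)⁻¹ := by
  rw [← mul_inv]
  congr 1
  field_simp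

lemma integrable_inv_sq_add_sq {a : ℝ} (ha : a ≠ 0) :
    Integrable fun t : ℝ ↦ (a ^ 2 + t ^ 2)⁻¹ := by
  simp_rw [inv_sq_add_sq_eq ha]
  exact (integrable_inv_one_add_sq.comp_div ha).const_mul _

lemma integral_univ_inv_sq_add_sq {a : ℝ} (ha : 0 < a) :
    ∫ t : ℝ, (a ^ 2 + t ^ 2)⁻¹ = π / a := by
  simp_rw [inv_sq_add_sq_eq ha.ne']
  rw [integral_const_mul, Measure.integral_comp_div (fun t ↦ (1 + t ^ 2)⁻¹),
    integral_univ_inv_one_add_sq, abs_of_pos ha, smul_eq_mul]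
  field_simp

lemma setIntegral_inv_sq_add_sq_le {a : ℝ} (ha : 0 < a) (s : Set ℝ) :
    ∫ t in s, (a ^ 2 + t ^ 2)⁻¹ ≤ π / a :=
  integral_univ_inv_sq_add_sq ha ▸
    setIntegral_le_integral (integrable_inv_sq_add_sq ha.ne') (.of_forall fun _ ↦ by positivity)

lemma jap_pos (x : ℝ) : 0 < jap x :=
  Real.sqrt_pos.mpr (by positivity)

lemma jap_abs (x : ℝ) : jap |x| = jap x := by
  rw [jap, jap, sq_abs]

lemma japNorm2_pos (x y : ℝ) : 0 < japNorm2 x y :=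
  Real.sqrt_pos.mpr (by positivity)

lemma japNorm2_sq (x y : ℝ) : japNorm2 x y ^ 2 = jap x ^ 2 + y ^ 2 := by
  rw [japNorm2, jap, Real.sq_sqrt (by positivity), Real.sq_sqrt (by positivity)]

lemma japNorm2_le_japNorm2 (x : ℝ) {y t : ℝ} (hy : 0 ≤ y) (hyt : y ≤ t) :
    japNorm2 x y ≤ japNorm2 x t :=
  Real.sqrt_le_sqrt (by nlinarith)

lemma japNorm2_rpow_neg_le {N : ℝ} (hN : 2 ≤ N) (x : ℝ) {y t : ℝ} (hy : 0 ≤ y) (hyt : y ≤ t) :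
    japNorm2 x t ^ (-N) ≤ japNorm2 x y ^ (2 - N) * (jap x ^ 2 + t ^ 2)⁻¹ := by
  have hsplit : japNorm2 x t ^ (-N) = japNorm2 x t ^ (2 - N) * (jap x ^ 2 + t ^ 2)⁻¹ := by
    rw [← japNorm2_sq, ← Real.rpow_two, ← div_eq_mul_inv, ← Real.rpow_sub (japNorm2_pos x t)]
    ring_nf
  rw [hsplit]
  gcongr ?_ * _
  exact Real.rpow_le_rpow_of_nonpos (japNorm2_pos x y) (japNorm2_le_japNorm2 x hy hyt)
    (by linarith)

/-- Lemma 7.7 (`rayintegral`): decay bound for the ray integral. -/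
theorem rayIntegral_bound (N : ℝ) (hN : 2 < N) (x₀ y₀ : ℝ) (hy₀ : 0 ≤ y₀) :
    rayIntegral N x₀ y₀ ≤ π * (jap |x₀|)⁻¹ * japNorm2 x₀ y₀ ^ (2 - N) := by
  set C := japNorm2 x₀ y₀ ^ (2 - N)
  have hC : 0 ≤ C := (Real.rpow_pos_of_pos (japNorm2_pos x₀ y₀) _).le
  calc rayIntegral N x₀ y₀ ≤ ∫ t in Set.Ici y₀, C * (jap x₀ ^ 2 + t ^ 2)⁻¹ := by
        refine integral_mono_of_nonneg (.of_forall fun t ↦ ?_) ?_ ?_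
        · exact (Real.rpow_pos_of_pos (japNorm2_pos x₀ t) _).le
        · exact ((integrable_inv_sq_add_sq (jap_pos x₀).ne').const_mul C).integrableOn
        · filter_upwards [ae_restrict_mem measurableSet_Ici] with t ht
          exact japNorm2_rpow_neg_le hN.le x₀ hy₀ ht
    _ = C * ∫ t in Set.Ici y₀, (jap x₀ ^ 2 + t ^ 2)⁻¹ := integral_const_mul C _
    _ ≤ C * (π / jap x₀) := by gcongr; exact setIntegral_inv_sq_add_sq_le (jap_pos x₀) _
    _ = π * (jap |x₀|)⁻¹ * C := by rw [jap_abs]; ring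
end
end

section
/- Let I and J be countable index sets, 0 < p ≤ 1, and let M = (m_{i,j})_{i∈I, j∈J} be a complex matrix with finite mixed quasi-norm ‖M‖_{Op,p} := max{ sup_{j∈J} (∑_{i∈I} |m_{i,j}|^p)^{1/p}, sup_{i∈I} (∑_{j∈J} |m_{i,j}|^p)^{1/p} } < ∞. Then for every α ∈ ℓ^p(J), the series (Mα)_i = ∑_{j∈J} m_{i,j} α_j converges absolutely for every i ∈ I, Mα ∈ ℓ^p(I), and ‖Mα‖_p ≤ ‖M‖_{Op,p} · ‖α‖_p. -/
open scoped ENNReal NNReal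

noncomputable section

/-- The mixed operator quasi-norm `‖M‖_{Op,p}`: the maximum of the suprema of the
`ℓ^p` quasi-norms of the columns and of the rows of `M`. -/
def opQuasiNorm {I J : Type*} (p : ℝ) (M : I → J → ℂ) : ℝ≥0∞ :=
  max (⨆ j : J, (∑' i : I, (‖M i j‖₊ : ℝ≥0∞) ^ p) ^ (1 / p))
    (⨆ i : I, (∑' j : J, (‖M i j‖₊ : ℝ≥0∞) ^ p) ^ (1 / p))

/-! Since `x ↦ xᵖ` is subadditive for `0 < p ≤ 1`, `|∑ⱼ mᵢⱼ αⱼ|ᵖ ≤ ∑ⱼ |mᵢⱼ|ᵖ |αⱼ|ᵖ`; summing over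
`i` and exchanging the order of summation (all terms live in `[0, ∞]`) leaves
`∑ⱼ (∑ᵢ |mᵢⱼ|ᵖ) |αⱼ|ᵖ ≤ ‖M‖ᵖ ‖α‖ᵖ`, and the same bound shows that every row sum is finite. -/

namespace ENNReal

theorem sum_rpow_le_sum_rpow {ι : Type*} (s : Finset ι) (f : ι → ℝ≥0∞) {p : ℝ} (hp0 : 0 < p)
    (hp1 : p ≤ 1) : (∑ i ∈ s, f i) ^ p ≤ ∑ i ∈ s, f i ^ p :=
  Finset.le_sum_of_subadditive (· ^ p) (zero_rpow_of_pos hp0).le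
    (fun a b => rpow_add_le_add_rpow a b hp0.le hp1) s f

theorem tsum_rpow_le_tsum_rpow {ι : Type*} (f : ι → ℝ≥0∞) {p : ℝ} (hp0 : 0 < p) (hp1 : p ≤ 1) :
    (∑' i, f i) ^ p ≤ ∑' i, f i ^ p := by
  rw [← le_rpow_inv_iff hp0, ENNReal.tsum_eq_iSup_sum]
  refine iSup_le fun s => (le_rpow_inv_iff hp0).2 ?_
  exact (sum_rpow_le_sum_rpow s f hp0 hp1).trans (ENNReal.sum_le_tsum s)

theorem toReal_rpow_one_div_le {T C A : ℝ≥0∞} {p : ℝ} (hp : 0 < p) (hC : C ≠ ⊤) (hA : A ≠ ⊤)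
    (h : T ≤ C ^ p * A) : T.toReal ^ (1 / p) ≤ C.toReal * A.toReal ^ (1 / p) := by
  have hp' : (0 : ℝ) ≤ 1 / p := one_div_nonneg.2 hp.le
  have hroot : T ^ (1 / p) ≤ C * A ^ (1 / p) := by
    calc T ^ (1 / p) ≤ (C ^ p * A) ^ (1 / p) := rpow_le_rpow h hp'
      _ = C * A ^ (1 / p) := by
        rw [mul_rpow_of_nonneg _ _ hp', ← rpow_mul, mul_one_div_cancel hp.ne', rpow_one]
  rw [toReal_rpow, toReal_rpow, ← toReal_mul]
  exact toReal_mono (mul_ne_top hC (rpow_ne_top_of_nonneg hp' hA)) hroot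

end ENNReal

section NormRpow

variable {ι E : Type*} [SeminormedAddGroup E] {p : ℝ}

theorem tsum_enorm_rpow_ne_top_iff (g : ι → E) (hp : 0 ≤ p) :
    ∑' i, ‖g i‖ₑ ^ p ≠ ⊤ ↔ Summable fun i => ‖g i‖ ^ p := by
  simp only [enorm_eq_nnnorm, ← ENNReal.coe_rpow_of_nonneg _ hp,
    ENNReal.tsum_coe_ne_top_iff_summable, ← NNReal.summable_coe, NNReal.coe_rpow, coe_nnnorm]

theorem tsum_norm_rpow_eq_toReal (g : ι → E) (hp : 0 ≤ p) :
    ∑' i, ‖g i‖ ^ p = (∑' i, ‖g i‖ₑ ^ p).toReal := by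
  rw [ENNReal.tsum_toReal_eq fun i => ENNReal.rpow_ne_top_of_nonneg hp enorm_ne_top]
  simp only [← ENNReal.toReal_rpow, toReal_enorm]

end NormRpow

section OpQuasiNorm

variable {I J : Type*} {p : ℝ}

theorem tsum_enorm_rpow_le_opQuasiNorm_rpow (M : I → J → ℂ) (hp : 0 < p) (j : J) :
    ∑' i, ‖M i j‖ₑ ^ p ≤ opQuasiNorm p M ^ p := by
  rw [← ENNReal.rpow_inv_le_iff hp, ← one_div]
  exact (le_iSup (fun j => (∑' i, (‖M i j‖₊ : ℝ≥0∞) ^ p) ^ (1 / p)) j).trans (le_max_left _ _)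

theorem tsum_rpow_tsum_enorm_mul_le (M : I → J → ℂ) (hp0 : 0 < p) (hp1 : p ≤ 1) (α : J → ℂ) :
    ∑' i, (∑' j, ‖M i j * α j‖ₑ) ^ p ≤ opQuasiNorm p M ^ p * ∑' j, ‖α j‖ₑ ^ p := by
  calc ∑' i, (∑' j, ‖M i j * α j‖ₑ) ^ p
      ≤ ∑' i, ∑' j, ‖M i j‖ₑ ^ p * ‖α j‖ₑ ^ p := by
        refine ENNReal.tsum_le_tsum fun i => ?_
        simp only [enorm_mul, ← ENNReal.mul_rpow_of_nonneg _ _ hp0.le]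
        exact ENNReal.tsum_rpow_le_tsum_rpow _ hp0 hp1
    _ = ∑' j, (∑' i, ‖M i j‖ₑ ^ p) * ‖α j‖ₑ ^ p := by
        rw [ENNReal.tsum_comm]
        simp only [ENNReal.tsum_mul_right]
    _ ≤ ∑' j, opQuasiNorm p M ^ p * ‖α j‖ₑ ^ p :=
        ENNReal.tsum_le_tsum fun j =>
          mul_le_mul_left (tsum_enorm_rpow_le_opQuasiNorm_rpow M hp0 j) _
    _ = opQuasiNorm p M ^ p * ∑' j, ‖α j‖ₑ ^ p := ENNReal.tsum_mul_left

end OpQuasiNorm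

theorem matrix_lp_operator_bound_general {I J : Type*}
    (p : ℝ) (hp0 : 0 < p) (hp1 : p ≤ 1)
    (M : I → J → ℂ) (hM : opQuasiNorm p M ≠ ⊤)
    (α : J → ℂ) (hα : Summable fun j => ‖α j‖ ^ p) :
    (∀ i : I, Summable fun j => ‖M i j * α j‖) ∧
      (Summable fun i => ‖∑' j, M i j * α j‖ ^ p) ∧
      (∑' i, ‖∑' j, M i j * α j‖ ^ p) ^ (1 / p) ≤
        (opQuasiNorm p M).toReal * (∑' j, ‖α j‖ ^ p) ^ (1 / p) := by
  have hA : ∑' j, ‖α j‖ₑ ^ p ≠ ⊤ := (tsum_enorm_rpow_ne_top_iff α hp0.le).2 hα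
  have hbound := tsum_rpow_tsum_enorm_mul_le M hp0 hp1 α
  have hfinite : opQuasiNorm p M ^ p * ∑' j, ‖α j‖ₑ ^ p ≠ ⊤ :=
    ENNReal.mul_ne_top (ENNReal.rpow_ne_top_of_nonneg hp0.le hM) hA
  have hrows : ∀ i, Summable fun j => ‖M i j * α j‖ := fun i =>
    have hrow : (∑' j, ‖M i j * α j‖ₑ) ^ p ≠ ⊤ :=
      ne_top_of_le_ne_top hfinite ((ENNReal.le_tsum i).trans hbound)
    tsum_enorm_ne_top_iff_summable_norm.1 ((ENNReal.rpow_eq_top_iff_of_pos hp0).not.1 hrow)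
  have himage : ∑' i, ‖∑' j, M i j * α j‖ₑ ^ p ≤ opQuasiNorm p M ^ p * ∑' j, ‖α j‖ₑ ^ p :=
    (ENNReal.tsum_le_tsum fun i =>
      ENNReal.rpow_le_rpow enorm_tsum_le_tsum_enorm hp0.le).trans hbound
  refine ⟨hrows, (tsum_enorm_rpow_ne_top_iff _ hp0.le).1 (ne_top_of_le_ne_top hfinite himage), ?_⟩
  rw [tsum_norm_rpow_eq_toReal _ hp0.le, tsum_norm_rpow_eq_toReal α hp0.le]
  exact ENNReal.toReal_rpow_one_div_le hp0 hM hA himage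

/-- Lemma 6.4: a matrix with finite mixed operator quasi-norm maps `ℓ^p` to `ℓ^p`
boundedly, for `0 < p ≤ 1`. -/
theorem matrix_lp_operator_bound {I J : Type*} [Countable I] [Countable J]
    (p : ℝ) (hp0 : 0 < p) (hp1 : p ≤ 1)
    (M : I → J → ℂ) (hM : opQuasiNorm p M ≠ ⊤)
    (α : J → ℂ) (hα : Summable fun j => ‖α j‖ ^ p) :
    (∀ i : I, Summable fun j => ‖M i j * α j‖) ∧
      (Summable fun i => ‖∑' j, M i j * α j‖ ^ p) ∧
      (∑' i, ‖∑' j, M i j * α j‖ ^ p) ^ (1 / p) ≤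
        (opQuasiNorm p M).toReal * (∑' j, ‖α j‖ ^ p) ^ (1 / p) :=
  matrix_lp_operator_bound_general p hp0 hp1 M hM α hα
end
end
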